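/- Suppose F_X satisfies 1 − F_X(x) = Cx^{−α}(1 + Dx^{−β}) exactly for large x, with C, α, β > 0, D ≠ 0, and the expression differentiable term-wise. Then ξ_X = 1/α, and the penultimate error h_X'(x) − ξ_X is asymptotically equivalent (as x → ∞) to (Dβ(β−1)/α²)·x^{−β} when β ≠ 1; moreover for the Box–Cox transformed variable with parameter λ, h_Y'(y(x)) − ξ_Y is asymptotically equivalent to (Dβ(β−λ)/α²)·x^{−β}, so taking λ = β annihilates the leading-order penultimate error term. -/

import Mathlib

/-!
Write `u = x^(-β)`. The tail `C x^(-α) (1 + D u)` has density `C x^(-α-1) (α + D (α + β) u)`,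
so for large `x` the reciprocal hazard is exactly `h_X(x) = x (1 + D u) / (α + D (α + β) u)`.
Differentiating, the Box–Cox penultimate error `h_X' + (λ - 1) h_X / x - λ/α` is `u` times the
rational function `D β (α (β - λ) - λ D (α + β) u) / (α (α + D (α + β) u)²)`, whose value at
`u = 0` is `D β (β - λ) / α²`. Taking `λ = 1` gives both `h_X' → 1/α` and the untransformed rate.
-/

open Real Filter Topology

/-- `h_X` for the tail `C x^(-α) (1 + D x^(-β))`; the constant `C` cancels. -/
noncomputable def secondOrderParetoRecipHazard (α β D x : ℝ) : ℝ :=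
  x * (1 + D * x ^ (-β)) / (α + D * (α + β) * x ^ (-β))

/-- `h_Y'(y(x)) - λ/α = x^(-β) · boxCoxErrorCoeff α β D λ (x^(-β))`. -/
noncomputable def boxCoxErrorCoeff (α β D lam u : ℝ) : ℝ :=
  D * β * (α * (β - lam) - lam * D * (α + β) * u) / (α * (α + D * (α + β) * u) ^ 2)

lemma hasDerivAt_secondOrderParetoTail (C α β D : ℝ) {x : ℝ} (hx : 0 < x) :
    HasDerivAt (fun z => C * z ^ (-α) * (1 + D * z ^ (-β)))
      (-(C * x ^ (-α) / x * (α + D * (α + β) * x ^ (-β)))) x := by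
  have hα := Real.hasDerivAt_rpow_const (p := -α) (Or.inl hx.ne')
  have hβ := Real.hasDerivAt_rpow_const (p := -β) (Or.inl hx.ne')
  refine ((hα.const_mul C).mul ((hβ.const_mul D).const_add 1)).congr_deriv ?_
  rw [Real.rpow_sub hx, Real.rpow_sub hx, Real.rpow_one]
  field_simp
  ring

lemma hasDerivAt_secondOrderParetoRecipHazard (α β D : ℝ) {x : ℝ} (hx : 0 < x)
    (hQ : α + D * (α + β) * x ^ (-β) ≠ 0) :
    HasDerivAt (secondOrderParetoRecipHazard α β D)
      ((α + D * (2 * α + β + β ^ 2) * x ^ (-β) + D ^ 2 * (α + β) * (x ^ (-β)) ^ 2)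
        / (α + D * (α + β) * x ^ (-β)) ^ 2) x := by
  have hβ := Real.hasDerivAt_rpow_const (p := -β) (Or.inl hx.ne')
  have hN := (hasDerivAt_id' x).mul ((hβ.const_mul D).const_add 1)
  have hQderiv := (hβ.const_mul (D * (α + β))).const_add α
  refine (hN.div hQderiv hQ).congr_deriv ?_
  rw [Pi.mul_apply, Real.rpow_sub hx, Real.rpow_one]
  -- the form in which `field_simp` writes the denominator
  have hQ' : α + D * x ^ (-β) * (α + β) ≠ 0 := by rwa [mul_right_comm]
  field_simp
  ring

lemma secondOrderPareto_boxCoxError_eq (α β D lam : ℝ) {x : ℝ} (hα : α ≠ 0) (hx : x ≠ 0)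
    (hQ : α + D * (α + β) * x ^ (-β) ≠ 0) :
    (α + D * (2 * α + β + β ^ 2) * x ^ (-β) + D ^ 2 * (α + β) * (x ^ (-β)) ^ 2)
        / (α + D * (α + β) * x ^ (-β)) ^ 2
      + (lam - 1) * secondOrderParetoRecipHazard α β D x / x - lam / α
      = x ^ (-β) * boxCoxErrorCoeff α β D lam (x ^ (-β)) := by
  unfold secondOrderParetoRecipHazard boxCoxErrorCoeff
  generalize x ^ (-β) = u at hQ ⊢
  have hQ' : α + D * u * (α + β) ≠ 0 := by rwa [mul_right_comm]
  field_simp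
  ring

lemma tendsto_boxCoxErrorCoeff (α β D lam : ℝ) (hα : α ≠ 0) (hβ : 0 < β) :
    Tendsto (fun x : ℝ => boxCoxErrorCoeff α β D lam (x ^ (-β))) atTop
      (𝓝 (D * β * (β - lam) / α ^ 2)) := by
  have hcont : ContinuousAt (boxCoxErrorCoeff α β D lam) 0 := by
    unfold boxCoxErrorCoeff
    fun_prop (disch := simp [hα])
  have hval : boxCoxErrorCoeff α β D lam 0 = D * β * (β - lam) / α ^ 2 := by
    unfold boxCoxErrorCoeff
    rw [div_eq_div_iff (by simp [hα]) (by simp [hα])]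
    ring
  exact hval ▸ hcont.tendsto.comp (tendsto_rpow_neg_atTop hβ)

lemma tendsto_mul_div_const_mul_self {ι : Type*} {l : Filter ι} {g k : ι → ℝ} {c : ℝ}
    (hc : c ≠ 0) (hg : ∀ᶠ i in l, g i ≠ 0) (hk : Tendsto k l (𝓝 c)) :
    Tendsto (fun i => g i * k i / (c * g i)) l (𝓝 1) := by
  have h := hk.div_const c
  rw [div_self hc] at h
  refine h.congr' ?_
  filter_upwards [hg] with i hi
  field_simp

lemma Filter.EventuallyEq.deriv_atTop {f g : ℝ → ℝ} (h : f =ᶠ[atTop] g) :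
    deriv f =ᶠ[atTop] deriv g := by
  obtain ⟨M, hM⟩ := eventually_atTop.mp h
  filter_upwards [eventually_gt_atTop M] with x hx
  exact EventuallyEq.deriv_eq <|
    eventually_of_mem (Ioi_mem_nhds hx) fun z hz => hM z (le_of_lt hz)

lemma eventuallyEq_secondOrderParetoRecipHazard {C α β D x₀ : ℝ} (hC : C ≠ 0) {F : ℝ → ℝ}
    (hF : ∀ x, x₀ ≤ x → 1 - F x = C * x ^ (-α) * (1 + D * x ^ (-β))) :
    (fun x => (1 - F x) / deriv F x) =ᶠ[atTop] secondOrderParetoRecipHazard α β D := by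
  filter_upwards [eventually_gt_atTop x₀, eventually_gt_atTop 0] with x hx₀ hx
  have hFeq : F =ᶠ[𝓝 x] fun z => 1 - C * z ^ (-α) * (1 + D * z ^ (-β)) := by
    filter_upwards [Ioi_mem_nhds hx₀] with z hz
    rw [← hF z (le_of_lt hz), sub_sub_cancel]
  have hdF : deriv F x = C * x ^ (-α) * ((α + D * (α + β) * x ^ (-β)) / x) := by
    rw [hFeq.deriv_eq, ((hasDerivAt_secondOrderParetoTail C α β D hx).const_sub 1).deriv]
    ring
  rw [hF x (le_of_lt hx₀), hdF, mul_div_mul_left _ _ (by positivity), div_div_eq_mul_div,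
    mul_comm, secondOrderParetoRecipHazard]

/-- Second-order Pareto tail (Example 1 / Table 1): if
`1 - F_X(x) = C x^(-α)(1 + D x^(-β))` exactly for large `x`, then
`ξ_X = lim h_X' = 1/α`; the penultimate error `h_X'(x) - 1/α` is
asymptotically `(Dβ(β-1)/α²) x^(-β)` when `β ≠ 1`; and for the Box–Cox
transform with parameter `λ`, `h_Y'(y(x)) - λ/α = h_X'(x) + (λ-1)h_X(x)/x - λ/α`
is asymptotically `(Dβ(β-λ)/α²) x^(-β)` when `λ ≠ β` — so `λ = β` annihilates
the leading-order penultimate error term. -/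
theorem secondOrder_pareto_boxcox_rate
    (C α β D : ℝ) (hC : 0 < C) (hα : 0 < α) (hβ : 0 < β) (hD : D ≠ 0)
    (x₀ : ℝ)
    (FX hX : ℝ → ℝ)
    (hFX : ∀ x : ℝ, x₀ ≤ x → 1 - FX x = C * x ^ (-α) * (1 + D * x ^ (-β)))
    (hhX : hX = fun x => (1 - FX x) / deriv FX x) :
    Tendsto (deriv hX) atTop (nhds (1 / α)) ∧
    (β ≠ 1 →
      Tendsto (fun x => (deriv hX x - 1 / α) / ((D * β * (β - 1) / α ^ 2) * x ^ (-β)))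
        atTop (nhds 1)) ∧
    (∀ lam : ℝ, lam ≠ β →
      Tendsto (fun x =>
          (deriv hX x + (lam - 1) * hX x / x - lam / α)
            / ((D * β * (β - lam) / α ^ 2) * x ^ (-β)))
        atTop (nhds 1)) := by
  have hQpos : ∀ᶠ x in atTop, 0 < α + D * (α + β) * x ^ (-β) := by
    have hQ := ((tendsto_rpow_neg_atTop hβ).const_mul (D * (α + β))).const_add α
    rw [mul_zero, add_zero] at hQ
    exact hQ.eventually (lt_mem_nhds hα)
  have hXeq := hhX ▸ eventuallyEq_secondOrderParetoRecipHazard hC.ne' hFX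
  have herror (lam : ℝ) : (fun x => deriv hX x + (lam - 1) * hX x / x - lam / α) =ᶠ[atTop]
      fun x => x ^ (-β) * boxCoxErrorCoeff α β D lam (x ^ (-β)) := by
    filter_upwards [hXeq, hXeq.deriv_atTop, hQpos, eventually_gt_atTop 0] with x hXx hdX hQ hx
    rw [hXx, hdX, (hasDerivAt_secondOrderParetoRecipHazard α β D hx hQ.ne').deriv]
    exact secondOrderPareto_boxCoxError_eq α β D lam hα.ne' hx.ne' hQ.ne'
  have hrate (lam : ℝ) (hlam : lam ≠ β) : Tendsto (fun x =>
      (deriv hX x + (lam - 1) * hX x / x - lam / α)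
        / ((D * β * (β - lam) / α ^ 2) * x ^ (-β))) atTop (𝓝 1) := by
    have hc : D * β * (β - lam) / α ^ 2 ≠ 0 :=
      div_ne_zero (mul_ne_zero (mul_ne_zero hD hβ.ne') (sub_ne_zero.mpr hlam.symm))
        (pow_ne_zero 2 hα.ne')
    refine (tendsto_mul_div_const_mul_self (g := fun x => x ^ (-β)) hc ?_
      (tendsto_boxCoxErrorCoeff α β D lam hα.ne' hβ)).congr' ?_
    · filter_upwards [eventually_gt_atTop 0] with x hx using (Real.rpow_pos_of_pos hx _).ne'
    · filter_upwards [herror lam] with x hx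
      rw [hx]
  have hlimit : Tendsto (fun x => deriv hX x + (1 - 1) * hX x / x - 1 / α) atTop (𝓝 0) := by
    have h := (tendsto_rpow_neg_atTop hβ).mul (tendsto_boxCoxErrorCoeff α β D 1 hα.ne' hβ)
    rw [zero_mul] at h
    exact h.congr' (herror 1).symm
  simp only [sub_self, zero_mul, zero_div, add_zero] at hlimit
  refine ⟨by simpa using hlimit.add_const (1 / α), fun hβ1 => ?_, hrate⟩
  simpa only [sub_self, zero_mul, zero_div, add_zero] using hrate 1 hβ1.symm
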